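/- Let T ∈ ℝ, let a, b, σ be positive real constants and let γ ≥ 0. Then for every t ≤ T, the map ψ ↦ Φ(t,T;ψ,γ) is differentiable on (0,∞) and has a right derivative at ψ = 0, and for every ψ ≥ 0 this (right) derivative equals exp( − ∫ₜ^T ( σ²·Φ(u,T;ψ,γ) + a ) du ). -/

import Mathlib

/-- k(x) := √(a² + 2(1+b·x)·σ²). -/
noncomputable def kfun (a b σ x : ℝ) : ℝ := Real.sqrt (a ^ 2 + 2 * (1 + b * x) * σ ^ 2)

/-- The explicit solution Φ(t,T;ψ,γ) of the Riccati equation with constant coefficient γ. -/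
noncomputable def Phi (a b σ ψ γ T t : ℝ) : ℝ :=
  ((kfun a b σ γ - a) / σ ^ 2 * (ψ + (a + kfun a b σ γ) / σ ^ 2) +
      (a + kfun a b σ γ) / σ ^ 2 * (ψ + (a - kfun a b σ γ) / σ ^ 2) *
        Real.exp (-(kfun a b σ γ) * (T - t))) /
    ((ψ + (a + kfun a b σ γ) / σ ^ 2) +
      ((kfun a b σ γ - a) / σ ^ 2 - ψ) * Real.exp (-(kfun a b σ γ) * (T - t)))

/-! For fixed `t`, `Φ` is a Möbius function `(αψ + β) / (γψ + δ)` of `ψ`, whose derivative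
`(αδ - βγ) / (γψ + δ)²` simplifies to `e^{-k(T-t)} (2k/σ²)² / D(t)²`, where `D` is the
denominator of `Φ`. In the time variable, `σ² Φ + a` is the derivative of `k u - 2 log D(u)`,
so `exp (-∫ₜ^T (σ² Φ + a)) = e^{-k(T-t)} D(T)² / D(t)²`, and `D(T) = 2k/σ²`. Since `|a| < k`,
`D` stays positive for `ψ ≥ 0` and `t ≤ T`, so no junk value of `log` or `/` occurs. -/

theorem abs_lt_kfun {a b σ x : ℝ} (hσ : σ ≠ 0) (hx : 0 < 1 + b * x) : |a| < kfun a b σ x := by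
  rw [kfun, ← Real.sqrt_sq_eq_abs]
  have : 0 < 2 * (1 + b * x) * σ ^ 2 := by positivity
  exact Real.sqrt_lt_sqrt (sq_nonneg a) (by linarith)

theorem hasDerivAt_linear_div_linear {𝕜 : Type*} [NontriviallyNormedField 𝕜] {α β γ δ x : 𝕜}
    (hx : γ * x + δ ≠ 0) :
    HasDerivAt (fun y => (α * y + β) / (γ * y + δ)) ((α * δ - β * γ) / (γ * x + δ) ^ 2) x := by
  have hlin (μ ν : 𝕜) : HasDerivAt (fun y => μ * y + ν) μ x := by
    simpa using ((hasDerivAt_id x).const_mul μ).add_const ν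
  have h := (hlin α β).fun_div (hlin γ δ) hx
  rwa [show α * (γ * x + δ) - (α * x + β) * γ = α * δ - β * γ by ring] at h

noncomputable def PhiDen (a b σ ψ γ T t : ℝ) : ℝ :=
  (ψ + (a + kfun a b σ γ) / σ ^ 2) +
    ((kfun a b σ γ - a) / σ ^ 2 - ψ) * Real.exp (-(kfun a b σ γ) * (T - t))

section

variable {a b σ ψ γ T t : ℝ}

theorem PhiDen_pos (hk : |a| < kfun a b σ γ) (hσ : σ ≠ 0) (hψ : 0 ≤ ψ) (ht : t ≤ T) :
    0 < PhiDen a b σ ψ γ T t := by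
  set k := kfun a b σ γ
  set E := Real.exp (-k * (T - t))
  have hE : E ≤ 1 := Real.exp_le_one_iff.2 (by nlinarith [(abs_nonneg a).trans_lt hk])
  have : 0 < a + k := by linarith [neg_abs_le a]
  have : 0 ≤ k - a := by linarith [le_abs_self a]
  calc 0 < ψ * (1 - E) + (a + k) / σ ^ 2 + (k - a) / σ ^ 2 * E := by
        have := Real.exp_pos (-k * (T - t))
        have := mul_nonneg hψ (sub_nonneg.2 hE)
        positivity
    _ = PhiDen a b σ ψ γ T t := by rw [PhiDen]; ring

theorem PhiDen_self : PhiDen a b σ ψ γ T T = 2 * kfun a b σ γ / σ ^ 2 := by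
  rw [PhiDen, sub_self, mul_zero, Real.exp_zero]
  ring

theorem hasDerivAt_Phi_psi (hD : PhiDen a b σ ψ γ T t ≠ 0) :
    HasDerivAt (fun p => Phi a b σ p γ T t)
      (Real.exp (-kfun a b σ γ * (T - t)) * (2 * kfun a b σ γ / σ ^ 2) ^ 2 /
        PhiDen a b σ ψ γ T t ^ 2) ψ := by
  set k := kfun a b σ γ
  set E := Real.exp (-k * (T - t))
  have hden : PhiDen a b σ ψ γ T t = (1 - E) * ψ + ((a + k) / σ ^ 2 + (k - a) / σ ^ 2 * E) := by
    rw [PhiDen]; ring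
  have hmoebius : (fun p => Phi a b σ p γ T t) = fun p =>
      (((k - a) / σ ^ 2 + (a + k) / σ ^ 2 * E) * p +
        ((k - a) / σ ^ 2 * ((a + k) / σ ^ 2) + (a + k) / σ ^ 2 * ((a - k) / σ ^ 2) * E)) /
      ((1 - E) * p + ((a + k) / σ ^ 2 + (k - a) / σ ^ 2 * E)) := by
    funext p
    rw [Phi]
    congr 1 <;> ring
  rw [hmoebius, hden]
  rw [hden] at hD
  exact (hasDerivAt_linear_div_linear hD).congr_deriv (by ring)

theorem hasDerivAt_PhiDen_time :
    HasDerivAt (fun u => PhiDen a b σ ψ γ T u)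
      (((kfun a b σ γ - a) / σ ^ 2 - ψ) *
        (Real.exp (-kfun a b σ γ * (T - t)) * kfun a b σ γ)) t := by
  have hexp : HasDerivAt (fun u => -kfun a b σ γ * (T - u)) (kfun a b σ γ) t := by
    simpa using ((hasDerivAt_id t).const_sub T).const_mul (-kfun a b σ γ)
  exact (hexp.exp.const_mul _).const_add _

theorem hasDerivAt_sub_two_mul_log_PhiDen (hσ : σ ≠ 0) (hD : PhiDen a b σ ψ γ T t ≠ 0) :
    HasDerivAt (fun u => kfun a b σ γ * u - 2 * Real.log (PhiDen a b σ ψ γ T u))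
      (σ ^ 2 * Phi a b σ ψ γ T t + a) t := by
  refine (((hasDerivAt_id t).const_mul (kfun a b σ γ)).sub
    ((hasDerivAt_PhiDen_time.log hD).const_mul 2)).congr_deriv ?_
  rw [PhiDen] at hD ⊢
  rw [Phi]
  set k := kfun a b σ γ
  set E := Real.exp (-k * (T - t))
  have hD' : σ ^ 2 * ψ + (a + k) + (k - a - σ ^ 2 * ψ) * E ≠ 0 := by
    convert mul_ne_zero (pow_ne_zero 2 hσ) hD using 1
    field_simp
  field_simp
  ring

theorem exp_neg_integral_Phi (hk : |a| < kfun a b σ γ) (hσ : σ ≠ 0) (hψ : 0 ≤ ψ) (ht : t ≤ T) :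
    Real.exp (-∫ u in t..T, (σ ^ 2 * Phi a b σ ψ γ T u + a)) =
      Real.exp (-kfun a b σ γ * (T - t)) * (2 * kfun a b σ γ / σ ^ 2) ^ 2 /
        PhiDen a b σ ψ γ T t ^ 2 := by
  have hD : ∀ u ∈ Set.uIcc t T, 0 < PhiDen a b σ ψ γ T u := fun u hu =>
    PhiDen_pos hk hσ hψ (Set.uIcc_of_le ht ▸ hu).2
  have hcont : ContinuousOn (fun u => σ ^ 2 * Phi a b σ ψ γ T u + a) (Set.uIcc t T) := by
    unfold Phi
    exact ContinuousOn.add (continuousOn_const.mul (ContinuousOn.div (by fun_prop) (by fun_prop)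
      fun u hu => (hD u hu).ne')) continuousOn_const
  have hexp_two_mul_log {x : ℝ} (hx : 0 < x) : Real.exp (2 * Real.log x) = x ^ 2 := by
    rw [two_mul, Real.exp_add, Real.exp_log hx, sq]
  rw [intervalIntegral.integral_eq_sub_of_hasDerivAt
    (fun u hu => hasDerivAt_sub_two_mul_log_PhiDen hσ (hD u hu).ne') hcont.intervalIntegrable]
  rw [show ∀ x y z : ℝ, -(x * T - y - (x * t - z)) = -x * (T - t) + y - z by intros; ring,
    Real.exp_sub, Real.exp_add, hexp_two_mul_log (hD T Set.right_mem_uIcc),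
    hexp_two_mul_log (hD t Set.left_mem_uIcc), PhiDen_self]

end

theorem Phi_deriv_in_psi_general
    (T a b σ γ : ℝ) (hb : 0 < b) (hσ : 0 < σ) (hγ : 0 ≤ γ) :
    (∀ t ≤ T, ∀ ψ > (0 : ℝ),
      HasDerivAt (fun p => Phi a b σ p γ T t)
        (Real.exp (-∫ u in t..T, (σ ^ 2 * Phi a b σ ψ γ T u + a))) ψ) ∧
    (∀ t ≤ T, ∀ ψ ≥ (0 : ℝ),
      HasDerivWithinAt (fun p => Phi a b σ p γ T t)
        (Real.exp (-∫ u in t..T, (σ ^ 2 * Phi a b σ ψ γ T u + a)))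
        (Set.Ici ψ) ψ) := by
  have hk : |a| < kfun a b σ γ := abs_lt_kfun hσ.ne' (by positivity)
  have hderiv : ∀ t ≤ T, ∀ ψ ≥ (0 : ℝ), HasDerivAt (fun p => Phi a b σ p γ T t)
      (Real.exp (-∫ u in t..T, (σ ^ 2 * Phi a b σ ψ γ T u + a))) ψ := fun t ht ψ hψ => by
    rw [exp_neg_integral_Phi hk hσ.ne' hψ ht]
    exact hasDerivAt_Phi_psi (PhiDen_pos hk hσ.ne' hψ ht).ne'
  exact ⟨fun t ht ψ hψ => hderiv t ht ψ hψ.le,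
    fun t ht ψ hψ => (hderiv t ht ψ hψ).hasDerivWithinAt⟩

/-- for each t ≤ T the map ψ ↦ Φ(t,T;ψ,γ) is differentiable on (0,∞)
and right-differentiable at 0, and for every ψ ≥ 0 the (right) derivative equals
exp(−∫ₜ^T (σ²·Φ(u,T;ψ,γ) + a) du). -/
theorem Phi_deriv_in_psi
    (T a b σ γ : ℝ) (ha : 0 < a) (hb : 0 < b) (hσ : 0 < σ) (hγ : 0 ≤ γ) :
    (∀ t ≤ T, ∀ ψ > (0 : ℝ),
      HasDerivAt (fun p => Phi a b σ p γ T t)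
        (Real.exp (-∫ u in t..T, (σ ^ 2 * Phi a b σ ψ γ T u + a))) ψ) ∧
    (∀ t ≤ T, ∀ ψ ≥ (0 : ℝ),
      HasDerivWithinAt (fun p => Phi a b σ p γ T t)
        (Real.exp (-∫ u in t..T, (σ ^ 2 * Phi a b σ ψ γ T u + a)))
        (Set.Ici ψ) ψ) :=
  Phi_deriv_in_psi_general T a b σ γ hb hσ hγ
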